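/- arXiv:0901.4766 — 2 statements merged into one kernel-verified Lean document; each statement's English description precedes it below -/
import Mathlib

section
/- There exist a real number β > 0, a positive integer α, a real number μ > 0 with μα − β > 1, and a real number r > 0, such that ∑_{k=1}^{∞} 2(−1)^{k−1} k^{β}/(k^{α} + r^2)^{μ} > 2/(1 + r^2)^{μ}. (Thus Tomovski–Hilfer's claimed inequality in the case β > 0, α ∈ ℕ, μα − β > 1 is false in general.) -/
/-!
Take `β = 30`, `α = 1`, `μ = 70`, `r = 2`, so the terms are `2 (-1)^(k-1) a_k` with
`a_k = k^30 / (k + 4)^70`. The bound `2 a_1` would follow from the alternating series estimate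
if `a` were decreasing, but `a` increases up to `k = 3`. Since `x ↦ x^30 / (x + 4)^70` decreases
on `[3, ∞)`, the Leibniz bound applies to the tail from `k = 3` and gives
`∑ (-1)^(k-1) a_k ≥ a_1 - a_2 + a_3 - a_4`, which exceeds `a_1` because `a_3 > a_2 + a_4`.
-/

open Finset Filter Real Set

theorem sum_range_le_tsum_alternating {E : Type*} [Ring E] [PartialOrder E] [IsOrderedRing E]
    [UniformSpace E] [IsUniformAddGroup E] [CompleteSpace E] [OrderClosedTopology E]
    {f : ℕ → E} (hf : Summable f) (k : ℕ) (hanti : AntitoneOn f (Ici (2 * k))) :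
    ∑ i ∈ range (2 * k + 2), (-1) ^ i * f i ≤ ∑' i, (-1) ^ i * f i := by
  have htail : Antitone fun i ↦ f (i + 2 * k) := fun i j hij ↦
    hanti (by simp) (by simp) (by omega)
  have hpair := htail.alternating_series_le_tendsto
    (hf.comp_injective (add_left_injective _)).tendsto_alternating_series_tsum 1
  have hsign : ∀ i, (-1 : E) ^ (i + 2 * k) = (-1) ^ i := by simp [pow_add]
  rw [← hf.alternating.sum_add_tsum_nat_add (2 * k), sum_range_succ, sum_range_succ, add_assoc]
  simp only [hsign]
  gcongr
  simpa [sum_range_succ, pow_succ, (even_two_mul k).neg_one_pow, add_comm 1, ← sub_eq_add_neg]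
    using hpair

theorem lt_tsum_alternating_of_add_lt {f : ℕ → ℝ} (hf : Summable f) (hanti : AntitoneOn f (Ici 2))
    (hpeak : f 1 + f 3 < f 2) : f 0 < ∑' i, (-1) ^ i * f i := by
  have hlower := sum_range_le_tsum_alternating hf 1 hanti
  norm_num [sum_range_succ] at hlower
  linarith

theorem antitoneOn_rpow_div_add_rpow {β μ c x₀ : ℝ} (hβ : 0 ≤ β) (hc : 0 ≤ c) (hx₀ : 0 < x₀)
    (h : β * (x₀ + c) ≤ μ * x₀) :
    AntitoneOn (fun x : ℝ ↦ x ^ β / (x + c) ^ μ) (Ici x₀) := by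
  have hderiv : ∀ x, 0 < x →
      HasDerivAt (fun x ↦ β * log x - μ * log (x + c)) (β / x - μ / (x + c)) x := by
    intro x hx
    have h := (((hasDerivAt_id x).log hx.ne').const_mul β).sub
      ((((hasDerivAt_id x).add_const c).log (by positivity)).const_mul μ)
    rwa [show β / x - μ / (x + c) = β * (1 / x) - μ * (1 / (x + c)) by ring]
  have hlog : AntitoneOn (fun x ↦ β * log x - μ * log (x + c)) (Ici x₀) := by
    refine antitoneOn_of_hasDerivWithinAt_nonpos (convex_Ici x₀)
      (fun x hx ↦ (hderiv x (hx₀.trans_le hx)).continuousAt.continuousWithinAt)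
      (fun x hx ↦ (hderiv x (hx₀.trans (by rwa [interior_Ici] at hx))).hasDerivWithinAt) ?_
    rw [interior_Ici]
    intro x (hx : x₀ < x)
    have hx' : 0 < x := hx₀.trans hx
    -- `β ≤ μ`, so `β (x + c) - μ x` decreases in `x` and stays `≤ 0` beyond `x₀`
    have hβμ : β ≤ μ := le_of_mul_le_mul_right (by nlinarith) hx₀
    rw [sub_nonpos, div_le_div_iff₀ hx' (by positivity)]
    nlinarith
  have hexp : ∀ x, 0 < x → x ^ β / (x + c) ^ μ = exp (β * log x - μ * log (x + c)) := by
    intro x hx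
    rw [rpow_def_of_pos hx, rpow_def_of_pos (by positivity), exp_sub, mul_comm β, mul_comm μ]
  intro x hx y hy hxy
  dsimp only
  rw [hexp x (hx₀.trans_le hx), hexp y (hx₀.trans_le hy)]
  exact exp_le_exp.mpr (hlog hx hy hxy)

theorem summable_rpow_div_add_rpow {β μ c : ℝ} (hc : 0 ≤ c) (hμ : 0 ≤ μ) (h : β - μ < -1) :
    Summable fun n : ℕ ↦ (n : ℝ) ^ β / ((n : ℝ) + c) ^ μ := by
  refine .of_norm_bounded_eventually_nat (summable_nat_rpow.mpr h) ?_
  filter_upwards [eventually_ge_atTop 1] with n hn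
  have hn : (0 : ℝ) < n := by exact_mod_cast hn
  rw [Real.norm_of_nonneg (by positivity), rpow_sub hn]
  gcongr
  linarith

/-- Counterexample to the Tomovski–Hilfer inequality in the case `β > 0`, `α ∈ ℕ`,
`μα − β > 1`: there exist such parameters and `r > 0` for which
`∑_{k≥1} 2(−1)^{k−1} k^β/(k^α + r^2)^μ > 2/(1 + r^2)^μ`. -/
theorem tomovski_hilfer_counterexample_nat_alpha :
    ∃ β : ℝ, 0 < β ∧ ∃ α : ℕ, 0 < α ∧ ∃ μ : ℝ, 0 < μ ∧ μ * α - β > 1 ∧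
      ∃ r : ℝ, 0 < r ∧
        (∑' k : ℕ+, 2 * (-1 : ℝ) ^ ((k : ℕ) - 1) * (k : ℝ) ^ β / ((k : ℝ) ^ α + r ^ 2) ^ μ) >
          2 / (1 + r ^ 2) ^ μ := by
  refine ⟨30, by norm_num, 1, one_pos, 70, by norm_num, by norm_num, 2, two_pos, ?_⟩
  set a : ℕ → ℝ := fun n ↦ ((n + 1 : ℕ) : ℝ) ^ (30 : ℝ) / (((n + 1 : ℕ) : ℝ) + 4) ^ (70 : ℝ)
  have hsum : Summable a := (summable_nat_add_iff 1).mpr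
    (summable_rpow_div_add_rpow (by norm_num) (by norm_num) (by norm_num))
  have hanti : AntitoneOn a (Ici 2) :=
    (antitoneOn_rpow_div_add_rpow (x₀ := 3) (by norm_num) (by norm_num) (by norm_num)
      (by norm_num)).comp_MonotoneOn (fun _ _ _ _ hmn ↦ by gcongr)
      (fun n (hn : 2 ≤ n) ↦ show (3 : ℝ) ≤ ((n + 1 : ℕ) : ℝ) by exact_mod_cast (by omega))
  have hpeak : a 1 + a 3 < a 2 := by norm_num [a, rpow_ofNat]
  have hterm : ∀ n : ℕ, 2 * (-1 : ℝ) ^ (n + 1 - 1) * ((n + 1 : ℕ) : ℝ) ^ (30 : ℝ) /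
      (((n + 1 : ℕ) : ℝ) ^ 1 + 2 ^ 2) ^ (70 : ℝ) = 2 * ((-1) ^ n * a n) := by
    intro n
    simp only [a, Nat.add_sub_cancel, pow_one, show (2 : ℝ) ^ 2 = 4 by norm_num]
    ring
  have ha0 : 2 / (1 + 2 ^ 2 : ℝ) ^ (70 : ℝ) = 2 * a 0 := by norm_num [a]
  rw [tsum_pnat_eq_tsum_succ (f := fun k ↦
      2 * (-1 : ℝ) ^ (k - 1) * (k : ℝ) ^ (30 : ℝ) / ((k : ℝ) ^ 1 + 2 ^ 2) ^ (70 : ℝ)),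
    tsum_congr hterm, tsum_mul_left, ha0]
  linarith [lt_tsum_alternating_of_add_lt hsum hanti hpeak]
end

section
/- There exist real numbers β > 0, α > 0, a real number μ > 0 with μα − β > 1, and a real number r > 0, such that ∑_{k=1}^{∞} 2(−1)^{k−1} k^{β}/(k^{α} + r^2)^{μ} > 2/(1 + r^2)^{μ}. (Thus Tomovski–Hilfer's claimed inequality in the case β > 0, α > 0, μα − β > 1 is false in general.) -/
/-!
Take `μ = 1`, `β = 10`, `α = 100` and `r² = 3¹⁰⁰`. For `k ≤ 3` the denominators `k¹⁰⁰ + r²` are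
all of size about `r²`, so the growth of `k¹⁰` makes the third term outweigh the second, while
`k¹⁰⁰ ≥ r²` from `k = 3` on, which makes the terms decrease from there. The alternating tail from
`k = 4` is therefore at least minus its first term, and the partial sum up to `k = 4` already
exceeds the first term `2 / (1 + r²)`.
-/

open Finset

lemma pow_mul_sub_le_pow_succ_sub_pow_succ {s t : ℝ} (hs : 0 ≤ s) (hst : s ≤ t) (k : ℕ) :
    s ^ k * (t - s) ≤ t ^ (k + 1) - s ^ (k + 1) := by
  have h := mul_le_mul_of_nonneg_left (pow_le_pow_left₀ hs hst k) (hs.trans hst)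
  linear_combination h

lemma div_pow_add_le_div_pow_add {m : ℕ} (hm : 2 ≤ m) {c s t : ℝ} (hc : 0 ≤ c) (hs : 0 < s)
    (hst : s ≤ t) (hcs : c ≤ s ^ m) : t / (t ^ m + c) ≤ s / (s ^ m + c) := by
  obtain ⟨k, rfl⟩ : ∃ k, m = k + 2 := ⟨m - 2, by omega⟩
  have ht : 0 < t := hs.trans_le hst
  rw [div_le_div_iff₀ (by positivity) (by positivity)]
  have hcs' : c ≤ s * t * s ^ k :=
    hcs.trans (by rw [show s ^ (k + 2) = s * s * s ^ k by ring]; gcongr)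
  calc t * (s ^ (k + 2) + c) = t * s ^ (k + 2) + c * s + c * (t - s) := by ring
    _ ≤ t * s ^ (k + 2) + c * s + s * t * (s ^ k * (t - s)) := by
        rw [← mul_assoc]; gcongr
    _ ≤ t * s ^ (k + 2) + c * s + s * t * (t ^ (k + 1) - s ^ (k + 1)) := by
        gcongr
        exact pow_mul_sub_le_pow_succ_sub_pow_succ hs.le hst k
    _ = s * (t ^ (k + 2) + c) := by ring

lemma tsum_alternating_le_of_antitone {f : ℕ → ℝ} (hfa : Antitone f) (hfs : Summable f) :
    ∑' n, (-1) ^ n * f n ≤ f 0 := by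
  simpa using hfa.tendsto_le_alternating_series hfs.tendsto_alternating_series_tsum 0

noncomputable def seriesCoeff (β α : ℕ) (c : ℝ) (n : ℕ) : ℝ :=
  ((n : ℝ) + 1) ^ β / (((n : ℝ) + 1) ^ α + c)

lemma tsum_pnat_eq_two_mul_tsum_seriesCoeff (β α : ℕ) (c : ℝ) :
    ∑' k : ℕ+, 2 * (-1 : ℝ) ^ ((k : ℕ) - 1) * (k : ℝ) ^ (β : ℝ) / ((k : ℝ) ^ (α : ℝ) + c) =
      2 * ∑' n : ℕ, (-1) ^ n * seriesCoeff β α c n := by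
  rw [tsum_pnat_eq_tsum_succ (f := fun k : ℕ ↦
    2 * (-1 : ℝ) ^ (k - 1) * (k : ℝ) ^ (β : ℝ) / ((k : ℝ) ^ (α : ℝ) + c)), ← tsum_mul_left]
  congr 1 with n
  simp only [seriesCoeff, Real.rpow_natCast, Nat.add_sub_cancel, Nat.cast_succ]
  ring

section seriesCoeff

variable {β α : ℕ} {c : ℝ}

lemma seriesCoeff_le (h : β + 2 ≤ α) (hc : 0 ≤ c) (n : ℕ) :
    seriesCoeff β α c n ≤ 1 / ((n : ℝ) + 1) ^ 2 := by
  have hx : (1 : ℝ) ≤ n + 1 := by simp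
  rw [seriesCoeff, div_le_div_iff₀ (by positivity) (by positivity), one_mul, ← pow_add]
  exact (pow_le_pow_right₀ hx h).trans (le_add_of_nonneg_right hc)

lemma summable_seriesCoeff (h : β + 2 ≤ α) (hc : 0 ≤ c) : Summable (seriesCoeff β α c) := by
  have hsq : Summable fun n : ℕ ↦ 1 / ((n : ℝ) + 1) ^ 2 := by
    simpa using (summable_nat_add_iff 1).2 (Real.summable_one_div_nat_pow.2 one_lt_two)
  exact hsq.of_nonneg_of_le (fun n ↦ by unfold seriesCoeff; positivity) (seriesCoeff_le h hc)

lemma antitone_seriesCoeff_add {m : ℕ} (hm : 2 ≤ m) (hc : 0 ≤ c) {N : ℕ}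
    (hcN : c ≤ ((N : ℝ) + 1) ^ (β * m)) :
    Antitone fun n ↦ seriesCoeff β (β * m) c (n + N) := by
  intro a b hab
  simp only [seriesCoeff, pow_mul]
  refine div_pow_add_le_div_pow_add hm hc (by positivity) (by gcongr) ?_
  rw [← pow_mul]
  exact hcN.trans (by gcongr; simp)

end seriesCoeff

/-- Counterexample to the Tomovski–Hilfer inequality in the case `β > 0`, `α > 0` real,
`μα − β > 1`: there exist such parameters and `r > 0` for which
`∑_{k≥1} 2(−1)^{k−1} k^β/(k^α + r^2)^μ > 2/(1 + r^2)^μ`. -/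
theorem tomovski_hilfer_counterexample_real_alpha :
    ∃ β : ℝ, 0 < β ∧ ∃ α : ℝ, 0 < α ∧ ∃ μ : ℝ, 0 < μ ∧ μ * α - β > 1 ∧
      ∃ r : ℝ, 0 < r ∧
        (∑' k : ℕ+, 2 * (-1 : ℝ) ^ ((k : ℕ) - 1) * (k : ℝ) ^ β / ((k : ℝ) ^ α + r ^ 2) ^ μ) >
          2 / (1 + r ^ 2) ^ μ := by
  refine ⟨10, by norm_num, 100, by norm_num, 1, by norm_num, by norm_num, 3 ^ 50, by positivity, ?_⟩
  have hseries := tsum_pnat_eq_two_mul_tsum_seriesCoeff 10 100 ((3 ^ 50) ^ 2)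
  rw [Nat.cast_ofNat, Nat.cast_ofNat] at hseries
  simp only [Real.rpow_one, hseries]
  set a := seriesCoeff 10 100 ((3 ^ 50) ^ 2)
  have hc : (0 : ℝ) ≤ (3 ^ 50) ^ 2 := by positivity
  have hsum : Summable a := summable_seriesCoeff (by norm_num) hc
  have hanti : Antitone fun n ↦ a (n + 3) :=
    antitone_seriesCoeff_add (β := 10) (m := 10) (by norm_num) hc (by norm_num)
  have htail : ∑' n, (-1) ^ n * a (n + 3) ≤ a 3 :=
    tsum_alternating_le_of_antitone hanti ((summable_nat_add_iff 3).2 hsum)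
  have hfirst : a 1 + a 3 < a 2 := by norm_num [a, seriesCoeff]
  have ha0 : 2 / (1 + (3 ^ 50) ^ 2) = 2 * a 0 := by simp [a, seriesCoeff, div_eq_mul_inv]
  have hshift : ∑' n, (-1) ^ (n + 3) * a (n + 3) = -∑' n, (-1) ^ n * a (n + 3) := by
    rw [← tsum_neg]; congr with n; ring
  rw [← hsum.alternating.sum_add_tsum_nat_add 3, hshift, ha0]
  simp only [sum_range_succ, sum_range_zero]
  linarith
end
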